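/- arXiv:1210.0196 — 2 statements merged into one kernel-verified Lean document; each statement's English description precedes it below -/
import Mathlib

section
/- Let A be an abelian category with enough injectives, let W be a thick class of objects, and let (W₁, F₁) and (W₂, F₂) be injective cotorsion pairs. If W ∩ F₁ = F₂ and W₁ ⊆ W, then W₂ ∩ W = W₁; consequently (W₂, W, F₁) is a Hovey triple. -/
/-
Since `W ∩ F₁ = F₂ ⊆ F₁`, every object of `W₁` is `Ext¹`-orthogonal to `F₂`, so
`W₁ ⊆ W₂ ∩ W`. Conversely, for `X ∈ W₂ ∩ W` take a special `W₁`-precover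
`0 → F → W' → X → 0` with `F ∈ F₁`. Thickness puts `F` in `W`, hence in `F₂`, so
`Ext¹(X, F) = 0`. The connecting map of the long exact `Ext(-, G)` sequence is composition
with this vanishing class, so `Ext¹(X, G)` embeds in `Ext¹(W', G) = 0` for `G ∈ F₁`.
The two cotorsion pairs of the Hovey triple are then `(W₂, F₂)` and `(W₁, F₁)`.
-/

open CategoryTheory CategoryTheory.Limits

universe w v u

variable {A : Type u} [Category.{v} A] [Abelian A]

/-- `IsShortExact i p` asserts that `0 → X → Y → Z → 0` is a short exact sequence. -/
def IsShortExact {X Y Z : A} (i : X ⟶ Y) (p : Y ⟶ Z) : Prop :=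
  ∃ w : i ≫ p = 0, (ShortComplex.mk i p w).ShortExact

section Ext

variable [HasExt.{w} A]

/-- `Ext¹(X, Y) = 0`. -/
def Ext1Zero (X Y : A) : Prop := Subsingleton (Abelian.Ext X Y 1)

/-- `(F, C)` is a cotorsion pair: each class is the `Ext¹`-orthogonal of the other. -/
def IsCotorsionPair (F C : Set A) : Prop :=
  (∀ X : A, X ∈ F ↔ ∀ Y ∈ C, Ext1Zero.{w} X Y) ∧
  (∀ Y : A, Y ∈ C ↔ ∀ X ∈ F, Ext1Zero.{w} X Y)

/-- A complete cotorsion pair: for every object `X` there are short exact sequences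
`0 → C → F → X → 0` and `0 → X → C' → F' → 0` with `F, F'` in the left class and
`C, C'` in the right class. -/
def IsCompleteCotorsionPair (F C : Set A) : Prop :=
  IsCotorsionPair.{w} F C ∧
  (∀ X : A, ∃ (Co Fo : A) (i : Co ⟶ Fo) (p : Fo ⟶ X),
    Co ∈ C ∧ Fo ∈ F ∧ IsShortExact i p) ∧
  (∀ X : A, ∃ (Co Fo : A) (i : X ⟶ Co) (p : Co ⟶ Fo),
    Co ∈ C ∧ Fo ∈ F ∧ IsShortExact i p)

end Ext

/-- A thick class: closed under direct summands (retracts) and satisfying two-out-of-three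
for short exact sequences. -/
def IsThickClass (W : Set A) : Prop :=
  (∀ (X Y : A) (s : Y ⟶ X) (r : X ⟶ Y), s ≫ r = 𝟙 Y → X ∈ W → Y ∈ W) ∧
  (∀ ⦃X Y Z : A⦄ (i : X ⟶ Y) (p : Y ⟶ Z), IsShortExact i p →
    (X ∈ W → Y ∈ W → Z ∈ W) ∧ (X ∈ W → Z ∈ W → Y ∈ W) ∧ (Y ∈ W → Z ∈ W → X ∈ W))

/-- The class `F` is closed under kernels of epimorphisms between objects of `F`. -/
def ClosedUnderKernelsOfEpis (F : Set A) : Prop :=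
  ∀ ⦃X Y Z : A⦄ (i : X ⟶ Y) (p : Y ⟶ Z), IsShortExact i p → Y ∈ F → Z ∈ F → X ∈ F

/-- The class `C` is closed under cokernels of monomorphisms between objects of `C`. -/
def ClosedUnderCokernelsOfMonos (C : Set A) : Prop :=
  ∀ ⦃X Y Z : A⦄ (i : X ⟶ Y) (p : Y ⟶ Z), IsShortExact i p → X ∈ C → Y ∈ C → Z ∈ C

/-- An injective cotorsion pair: a complete cotorsion pair `(W, F)` with `W` thick and
`W ∩ F` equal to the class of injective objects. -/
def IsInjectiveCotorsionPair [HasExt.{w} A] (W F : Set A) : Prop :=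
  IsCompleteCotorsionPair.{w} W F ∧ IsThickClass W ∧
  ∀ X : A, (X ∈ W ∧ X ∈ F) ↔ Injective X

/-- A projective cotorsion pair: a complete cotorsion pair `(C, W)` with `W` thick and
`C ∩ W` equal to the class of projective objects. -/
def IsProjectiveCotorsionPair [HasExt.{w} A] (C W : Set A) : Prop :=
  IsCompleteCotorsionPair.{w} C W ∧ IsThickClass W ∧
  ∀ X : A, (X ∈ C ∧ X ∈ W) ↔ Projective X

/-- A Hovey triple `(Q, W, R)`: `W` is thick and both `(Q, W ∩ R)` and `(Q ∩ W, R)` are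
complete cotorsion pairs. -/
def IsHoveyTriple [HasExt.{w} A] (Q W R : Set A) : Prop :=
  IsThickClass W ∧ IsCompleteCotorsionPair.{w} Q (W ∩ R) ∧
    IsCompleteCotorsionPair.{w} (Q ∩ W) R

theorem IsThickClass.closedUnderKernelsOfEpis {W : Set A} (hW : IsThickClass W) :
    ClosedUnderKernelsOfEpis W :=
  fun _ _ _ i p hip => (hW.2 i p hip).2.2

section Ext

variable [HasExt.{w} A]

theorem Ext1Zero.of_isShortExact {K Y X : A} {i : K ⟶ Y} {p : Y ⟶ X} (hip : IsShortExact i p)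
    (hclass : Ext1Zero.{w} X K) {G : A} (hY : Ext1Zero.{w} Y G) : Ext1Zero.{w} X G := by
  obtain ⟨_, hS⟩ := hip
  refine subsingleton_of_forall_eq 0 fun x => ?_
  have hpx : (Abelian.Ext.mk₀ p).comp x (zero_add 1) = 0 := hY.elim _ _
  obtain ⟨y, rfl⟩ := Abelian.Ext.contravariant_sequence_exact₃ hS G x hpx (n₀ := 0) rfl
  rw [show hS.extClass = 0 from hclass.elim _ _, Abelian.Ext.zero_comp]

namespace IsCotorsionPair

variable {F C : Set A}

theorem ext1Zero (h : IsCotorsionPair.{w} F C) {X Y : A} (hX : X ∈ F) (hY : Y ∈ C) :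
    Ext1Zero.{w} X Y :=
  (h.1 X).1 hX Y hY

theorem mem_left_of_isShortExact (h : IsCotorsionPair.{w} F C) {K Y X : A} {i : K ⟶ Y}
    {p : Y ⟶ X} (hip : IsShortExact i p) (hY : Y ∈ F) (hclass : Ext1Zero.{w} X K) : X ∈ F :=
  (h.1 X).2 fun _ hG => Ext1Zero.of_isShortExact hip hclass (h.ext1Zero hY hG)

theorem left_subset_of_right_subset {F' C' : Set A} (h : IsCotorsionPair.{w} F C)
    (h' : IsCotorsionPair.{w} F' C') (hC : C' ⊆ C) : F ⊆ F' :=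
  fun _ hX => (h'.1 _).2 fun _ hY => h.ext1Zero hX (hC hY)

end IsCotorsionPair

theorem inter_eq_of_inter_right_eq {W W₁ F₁ W₂ F₂ : Set A}
    (hW : ClosedUnderKernelsOfEpis W) (h₁ : IsCompleteCotorsionPair.{w} W₁ F₁)
    (h₂ : IsCotorsionPair.{w} W₂ F₂) (hWF : W ∩ F₁ = F₂) (hW₁ : W₁ ⊆ W) :
    W₂ ∩ W = W₁ := by
  refine subset_antisymm (fun X ⟨hX₂, hX⟩ => ?_) fun X hX₁ =>
    ⟨h₁.1.left_subset_of_right_subset h₂ (hWF ▸ Set.inter_subset_right) hX₁, hW₁ hX₁⟩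
  obtain ⟨K, Y, i, p, hK, hY, hip⟩ := h₁.2.1 X
  have hKF₂ : K ∈ F₂ := hWF ▸ ⟨hW i p hip (hW₁ hY) hX, hK⟩
  exact h₁.1.mem_left_of_isShortExact hip hY (h₂.ext1Zero hX₂ hKF₂)

end Ext

theorem spotting_localizations_one_general [HasExt.{w} A]
    (Wc : Set A) (hWc : IsThickClass Wc) (W₁ F₁ W₂ F₂ : Set A)
    (h1 : IsInjectiveCotorsionPair.{w} W₁ F₁) (h2 : IsInjectiveCotorsionPair.{w} W₂ F₂)
    (hWF : Wc ∩ F₁ = F₂) (hW1 : W₁ ⊆ Wc) :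
    W₂ ∩ Wc = W₁ ∧ IsHoveyTriple.{w} W₂ Wc F₁ := by
  have hinter : W₂ ∩ Wc = W₁ :=
    inter_eq_of_inter_right_eq hWc.closedUnderKernelsOfEpis h1.1 h2.1.1 hWF hW1
  refine ⟨hinter, hWc, ?_, ?_⟩
  · exact hWF ▸ h2.1
  · exact hinter ▸ h1.1

theorem spotting_localizations_one [EnoughInjectives A] [HasExt.{w} A]
    (Wc : Set A) (hWc : IsThickClass Wc) (W₁ F₁ W₂ F₂ : Set A)
    (h1 : IsInjectiveCotorsionPair.{w} W₁ F₁) (h2 : IsInjectiveCotorsionPair.{w} W₂ F₂)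
    (hWF : Wc ∩ F₁ = F₂) (hW1 : W₁ ⊆ Wc) :
    W₂ ∩ Wc = W₁ ∧ IsHoveyTriple.{w} W₂ Wc F₁ :=
  spotting_localizations_one_general Wc hWc W₁ F₁ W₂ F₂ h1 h2 hWF hW1
end

section
/- Let A be an abelian category with enough injectives, let W be a thick class of objects, and let (W₁, F₁) and (W₂, F₂) be injective cotorsion pairs. If W₂ ∩ W = W₁ and F₂ ⊆ W, then W ∩ F₁ = F₂; consequently (W₂, W, F₁) is a Hovey triple. -/
/-!
Every object of `F₂` lies in `Wc`, and in `F₁` since `W₁ ⊆ W₂`. Conversely, for `X ∈ Wc ∩ F₁`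
take an approximation `0 → X → C → V → 0` with `C ∈ F₂` and `V ∈ W₂`. Then `C ∈ Wc`, so
`V ∈ W₂ ∩ Wc = W₁` and `Ext¹(V, X) = 0`; the long exact `Ext` sequence now embeds `Ext¹(-, X)`
into `Ext¹(-, C)`, which vanishes on `W₂`, so `X ∈ F₂`. The two cotorsion pairs of the Hovey
triple are then `(W₂, F₂)` and `(W₁, F₁)`.
-/

open CategoryTheory CategoryTheory.Limits

universe w v u

variable {A : Type u} [Category.{v} A] [Abelian A]

lemma IsThickClass.closedUnderCokernelsOfMonos {W : Set A} (hW : IsThickClass W) :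
    ClosedUnderCokernelsOfMonos W :=
  fun _ _ _ i p hip => (hW.2 i p hip).1

section Ext

variable [HasExt.{w} A]

open Abelian in
lemma ext1Zero_of_isShortExact {X Y Z : A} {i : X ⟶ Y} {p : Y ⟶ Z} (hip : IsShortExact i p)
    (T : A) (hTY : Ext1Zero.{w} T Y) (hZX : Ext1Zero.{w} Z X) : Ext1Zero.{w} T X := by
  obtain ⟨_, hS⟩ := hip
  suffices ∀ e : Ext T X 1, e = 0 from ⟨fun e e' => (this e).trans (this e').symm⟩
  intro e
  -- `e` dies in `Ext¹(T, Y)`, so it is a multiple of the class of the extension, which is zero.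
  obtain ⟨x, rfl⟩ := Ext.covariant_sequence_exact₁ T hS e (Subsingleton.elim (h := hTY) _ _)
    (zero_add 1)
  rw [Subsingleton.elim (h := hZX) hS.extClass 0, Ext.comp_zero]

lemma IsCotorsionPair.right_subset_of_left_subset {W₁ F₁ W₂ F₂ : Set A}
    (h₁ : IsCotorsionPair.{w} W₁ F₁) (h₂ : IsCotorsionPair.{w} W₂ F₂) (hW : W₁ ⊆ W₂) :
    F₂ ⊆ F₁ :=
  fun X hX => (h₁.2 X).2 fun Z hZ => (h₂.2 X).1 hX Z (hW hZ)

lemma inter_right_eq_of_inter_left_eq {Wc W₁ F₁ W₂ F₂ : Set A}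
    (hWc : ClosedUnderCokernelsOfMonos Wc) (h₁ : IsCotorsionPair.{w} W₁ F₁)
    (h₂ : IsCompleteCotorsionPair.{w} W₂ F₂) (hW : W₂ ∩ Wc = W₁) (hF : F₂ ⊆ Wc) :
    Wc ∩ F₁ = F₂ := by
  refine subset_antisymm ?_ fun X hX => ⟨hF hX, ?_⟩
  · rintro X ⟨hXWc, hXF₁⟩
    obtain ⟨C, V, i, p, hC, hV, hip⟩ := h₂.2.2 X
    have hVW₁ : V ∈ W₁ := hW ▸ ⟨hV, hWc i p hip hXWc (hF hC)⟩
    exact (h₂.1.2 X).2 fun Z hZ =>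
      ext1Zero_of_isShortExact hip Z ((h₂.1.1 Z).1 hZ C hC) ((h₁.1 V).1 hVW₁ X hXF₁)
  · exact h₁.right_subset_of_left_subset h₂.1 (hW ▸ Set.inter_subset_left) hX

end Ext

theorem spotting_localizations_two_general [HasExt.{w} A]
    (Wc : Set A) (hWc : IsThickClass Wc) (W₁ F₁ W₂ F₂ : Set A)
    (h1 : IsInjectiveCotorsionPair.{w} W₁ F₁) (h2 : IsInjectiveCotorsionPair.{w} W₂ F₂)
    (hW : W₂ ∩ Wc = W₁) (hF : F₂ ⊆ Wc) :
    Wc ∩ F₁ = F₂ ∧ IsHoveyTriple.{w} W₂ Wc F₁ := by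
  have hF₂ : Wc ∩ F₁ = F₂ :=
    inter_right_eq_of_inter_left_eq hWc.closedUnderCokernelsOfMonos h1.1.1 h2.1 hW hF
  exact ⟨hF₂, hWc, hF₂ ▸ h2.1, hW ▸ h1.1⟩

theorem spotting_localizations_two [EnoughInjectives A] [HasExt.{w} A]
    (Wc : Set A) (hWc : IsThickClass Wc) (W₁ F₁ W₂ F₂ : Set A)
    (h1 : IsInjectiveCotorsionPair.{w} W₁ F₁) (h2 : IsInjectiveCotorsionPair.{w} W₂ F₂)
    (hW : W₂ ∩ Wc = W₁) (hF : F₂ ⊆ Wc) :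
    Wc ∩ F₁ = F₂ ∧ IsHoveyTriple.{w} W₂ Wc F₁ :=
  spotting_localizations_two_general Wc hWc W₁ F₁ W₂ F₂ h1 h2 hW hF
end
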